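/- arXiv:2102.04613 — 5 statements merged into one kernel-verified Lean document; each statement's English description precedes it below -/
import Mathlib

section
/- Let L > 0, h > 0 and set δ := 2Lh. For any gradient vectors g, g̃ ∈ ℝ^d, define the one-step coupled difference of the VR-HMC update (friction γ = 2, inverse mass ξ = L, identical initial position, momentum and Gaussian noise for both gradients): Δx := -(1/2)·(h - (1 - e^{-δ})/(2L))·(g̃ - g) and Δv := -(1/(2L))·(1 - e^{-δ})·(g̃ - g). Then ‖Δx‖² + ‖Δx + Δv‖² = ((δ² + 1)e^{2δ} - 2e^{δ} + 1)·e^{-2δ}/(8L²) · ‖g̃ - g‖², and this quantity is at most (δ²/(4L²))·‖g̃ - g‖². -/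
lemma vrhmc_scalar (L δ : ℝ) (hL : 0 < L) (hδpos : 0 < δ) :
    (-((1 / 2) * (δ / (2 * L) - (1 - Real.exp (-δ)) / (2 * L)))) ^ 2 +
      (-((1 / 2) * (δ / (2 * L) - (1 - Real.exp (-δ)) / (2 * L))) +
        -((1 / (2 * L)) * (1 - Real.exp (-δ)))) ^ 2 =
      ((δ ^ 2 + 1) * Real.exp (2 * δ) - 2 * Real.exp δ + 1) * Real.exp (-(2 * δ))
        / (8 * L ^ 2) ∧
    (-((1 / 2) * (δ / (2 * L) - (1 - Real.exp (-δ)) / (2 * L)))) ^ 2 +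
      (-((1 / 2) * (δ / (2 * L) - (1 - Real.exp (-δ)) / (2 * L))) +
        -((1 / (2 * L)) * (1 - Real.exp (-δ)))) ^ 2 ≤ δ ^ 2 / (4 * L ^ 2) := by
  have hL0 : L ≠ 0 := ne_of_gt hL
  have key : (-((1 / 2) * (δ / (2 * L) - (1 - Real.exp (-δ)) / (2 * L)))) ^ 2 +
      (-((1 / 2) * (δ / (2 * L) - (1 - Real.exp (-δ)) / (2 * L))) +
        -((1 / (2 * L)) * (1 - Real.exp (-δ)))) ^ 2 =
      (δ ^ 2 + (1 - Real.exp (-δ)) ^ 2) / (8 * L ^ 2) := by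
    field_simp
    ring
  have hE : Real.exp (-δ) = (Real.exp δ)⁻¹ := Real.exp_neg δ
  have hE2 : Real.exp (2 * δ) = (Real.exp δ) ^ 2 := by rw [two_mul, Real.exp_add, sq]
  have hEm2 : Real.exp (-(2 * δ)) = ((Real.exp δ) ^ 2)⁻¹ := by rw [Real.exp_neg, hE2]
  have hEne : Real.exp δ ≠ 0 := Real.exp_ne_zero δ
  have key2 : (δ ^ 2 + (1 - Real.exp (-δ)) ^ 2) / (8 * L ^ 2) =
      ((δ ^ 2 + 1) * Real.exp (2 * δ) - 2 * Real.exp δ + 1) * Real.exp (-(2 * δ))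
        / (8 * L ^ 2) := by
    rw [hE, hE2, hEm2]
    field_simp
    ring
  have hexp_le : 1 - Real.exp (-δ) ≤ δ := by
    have := Real.add_one_le_exp (-δ); linarith
  have hexp_nonneg : 0 ≤ 1 - Real.exp (-δ) := by
    have h1 : Real.exp (-δ) * Real.exp δ = 1 := by rw [← Real.exp_add]; simp
    have h2 : 1 + δ ≤ Real.exp δ := by linarith [Real.add_one_le_exp δ]
    nlinarith [Real.exp_pos (-δ)]
  have h1 : (1 - Real.exp (-δ)) ^ 2 ≤ δ ^ 2 := by nlinarith
  refine ⟨key.trans key2, ?_⟩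
  rw [key, div_le_div_iff₀ (by positivity) (by positivity)]
  nlinarith [mul_nonneg (sub_nonneg.mpr h1) (sq_nonneg L)]

/-- one-step coupled difference of the VR-HMC update with two gradient
vectors `g` and `g̃`: exact value of `‖Δx‖² + ‖Δx + Δv‖²` and its bound `(δ²/(4L²))‖g̃-g‖²`. -/
theorem vrhmc_one_step_gradient_difference
    (d : ℕ) (L h : ℝ) (hL : 0 < L) (hh : 0 < h)
    (g gt : EuclideanSpace ℝ (Fin d))
    (δ : ℝ) (hδ : δ = 2 * L * h)
    (Δx Δv : EuclideanSpace ℝ (Fin d))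
    (hΔx : Δx = (-((1 / 2) * (h - (1 - Real.exp (-δ)) / (2 * L)))) • (gt - g))
    (hΔv : Δv = (-((1 / (2 * L)) * (1 - Real.exp (-δ)))) • (gt - g)) :
    ‖Δx‖ ^ 2 + ‖Δx + Δv‖ ^ 2 =
      ((δ ^ 2 + 1) * Real.exp (2 * δ) - 2 * Real.exp δ + 1) * Real.exp (-(2 * δ))
        / (8 * L ^ 2) * ‖gt - g‖ ^ 2 ∧
    ‖Δx‖ ^ 2 + ‖Δx + Δv‖ ^ 2 ≤ δ ^ 2 / (4 * L ^ 2) * ‖gt - g‖ ^ 2 := by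
  have hh' : h = δ / (2 * L) := by rw [hδ]; field_simp
  have hδpos : 0 < δ := by rw [hδ]; positivity
  rw [hh'] at hΔx
  have hsq : ∀ c : ℝ, ‖c • (gt - g)‖ ^ 2 = c ^ 2 * ‖gt - g‖ ^ 2 := fun c => by
    rw [norm_smul, mul_pow, Real.norm_eq_abs, sq_abs]
  have hadd : Δx + Δv = ((-((1 / 2) * (δ / (2 * L) - (1 - Real.exp (-δ)) / (2 * L)))) +
      (-((1 / (2 * L)) * (1 - Real.exp (-δ))))) • (gt - g) := by
    rw [hΔx, hΔv, add_smul]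
  have hn1 : ‖Δx‖ ^ 2 =
      (-((1 / 2) * (δ / (2 * L) - (1 - Real.exp (-δ)) / (2 * L)))) ^ 2 * ‖gt - g‖ ^ 2 := by
    rw [hΔx]; exact hsq _
  have hn2 : ‖Δx + Δv‖ ^ 2 = ((-((1 / 2) * (δ / (2 * L) - (1 - Real.exp (-δ)) / (2 * L)))) +
      (-((1 / (2 * L)) * (1 - Real.exp (-δ))))) ^ 2 * ‖gt - g‖ ^ 2 := by
    rw [hadd]; exact hsq _
  obtain ⟨k1, k2⟩ := vrhmc_scalar L δ hL hδpos
  constructor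
  · rw [hn1, hn2, ← add_mul, k1]
  · rw [hn1, hn2, ← add_mul]
    exact mul_le_mul_of_nonneg_right k2 (by positivity)
end

section
/- Let L > 0, h > 0, δ := 2Lh, and ρ_B ∈ (0, 1]. Let (Ω, ℱ, P) be a probability space, 𝒢 ⊆ ℱ a sub-σ-algebra, and let a, b, c : Ω → ℝ^d be integrable random vectors such that a - E[b | 𝒢] = (1 - ρ_B)·c almost surely and E‖c‖² < ∞. Form the one-step coupled difference of the VR-HMC update with gradient vectors g := a and g̃ := E[b | 𝒢], i.e., Δx := -(1/2)·(h - (1 - e^{-δ})/(2L))·(g̃ - g) and Δv := -(1/(2L))·(1 - e^{-δ})·(g̃ - g), pointwise on Ω. Then E[‖Δx‖² + ‖Δx + Δv‖²] ≤ (δ²/(4L²))·(1 - ρ_B)²·E‖c‖². -/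
open MeasureTheory

/-!
Both coordinates of the coupled difference are scalar multiples of `u := E[b | 𝒢] - a`, so the
expectation equals `(α² + (α + β)²) E‖u‖²`. Writing `s := (1 - e^{-δ})/(2L) ∈ [0, h]`, the
coefficients are `α = -(h - s)/2` and `α + β = -(h + s)/2`, whence `α² + (α + β)² = (h² + s²)/2 ≤ h²`,
and `h² = δ²/(4L²)`. Finally `u = -(1 - ρ_B) c` almost surely gives `E‖u‖² = (1 - ρ_B)² E‖c‖²`, so
both sides are constant multiples of `E‖c‖²` and the bound reduces to comparing the constants.
-/

theorem Real.one_sub_exp_neg_mem_Icc {t : ℝ} (ht : 0 ≤ t) : 1 - Real.exp (-t) ∈ Set.Icc 0 t :=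
  ⟨sub_nonneg.2 (Real.exp_le_one_iff.2 (neg_nonpos.2 ht)), by
    linarith [Real.one_sub_le_exp_neg t]⟩

theorem sq_half_sub_add_sq_half_add_le {h s : ℝ} (hs : s ^ 2 ≤ h ^ 2) :
    (-((h - s) / 2)) ^ 2 + (-((h + s) / 2)) ^ 2 ≤ h ^ 2 := by
  nlinarith

section

variable {Ω E : Type*} {m : MeasurableSpace Ω} {P : Measure Ω}
  [NormedAddCommGroup E] [NormedSpace ℝ E]

theorem integral_norm_smul_sq_add_norm_smul_add_smul_sq (α β : ℝ) (u : Ω → E) :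
    ∫ ω, (‖α • u ω‖ ^ 2 + ‖α • u ω + β • u ω‖ ^ 2) ∂P =
      (α ^ 2 + (α + β) ^ 2) * ∫ ω, ‖u ω‖ ^ 2 ∂P := by
  simp_rw [← add_smul, norm_smul, mul_pow, Real.norm_eq_abs, sq_abs, ← add_mul]
  exact integral_const_mul _ _

theorem integral_norm_sq_of_ae_eq_smul {u c : Ω → E} {r : ℝ} (hu : u =ᵐ[P] fun ω ↦ r • c ω) :
    ∫ ω, ‖u ω‖ ^ 2 ∂P = r ^ 2 * ∫ ω, ‖c ω‖ ^ 2 ∂P := by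
  rw [integral_congr_ae (hu.mono fun ω hω ↦ congrArg (‖·‖ ^ 2) hω), ← integral_const_mul]
  simp_rw [norm_smul, mul_pow, Real.norm_eq_abs, sq_abs]

end

theorem vrhmc_one_step_bias_bound_general
    (d : ℕ) (L h : ℝ) (hL : 0 < L) (hh : 0 < h)
    (ρB : ℝ)
    (δ : ℝ) (hδ : δ = 2 * L * h)
    {Ω : Type*} [inst : MeasurableSpace Ω] (P : Measure Ω)
    (𝒢 : MeasurableSpace Ω)
    (a b c : Ω → EuclideanSpace ℝ (Fin d))
    (hbias : ∀ᵐ ω ∂P, a ω - (P[b | 𝒢]) ω = (1 - ρB) • c ω)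
    (Δx Δv : Ω → EuclideanSpace ℝ (Fin d))
    (hΔx : ∀ ω, Δx ω =
      (-((1 / 2) * (h - (1 - Real.exp (-δ)) / (2 * L)))) • ((P[b | 𝒢]) ω - a ω))
    (hΔv : ∀ ω, Δv ω =
      (-((1 / (2 * L)) * (1 - Real.exp (-δ)))) • ((P[b | 𝒢]) ω - a ω)) :
    ∫ ω, (‖Δx ω‖ ^ 2 + ‖Δx ω + Δv ω‖ ^ 2) ∂P ≤
      δ ^ 2 / (4 * L ^ 2) * (1 - ρB) ^ 2 * ∫ ω, ‖c ω‖ ^ 2 ∂P := by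
  set s := (1 - Real.exp (-δ)) / (2 * L)
  have hs : s ^ 2 ≤ h ^ 2 := by
    obtain ⟨hs₀, hs₁⟩ := Real.one_sub_exp_neg_mem_Icc (t := δ) (by rw [hδ]; positivity)
    have hsh : s ≤ h := by rw [div_le_iff₀ (by positivity)]; linarith
    exact pow_le_pow_left₀ (div_nonneg hs₀ (by positivity)) hsh 2
  set α := -((1 / 2) * (h - s))
  set β := -((1 / (2 * L)) * (1 - Real.exp (-δ)))
  have hcoef : α ^ 2 + (α + β) ^ 2 ≤ δ ^ 2 / (4 * L ^ 2) := by
    have hαβ : α + β = -((h + s) / 2) := by simp only [α, β, s]; ring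
    rw [hαβ, show α = -((h - s) / 2) by ring, show δ ^ 2 / (4 * L ^ 2) = h ^ 2 by
      rw [hδ]; field_simp; ring]
    exact sq_half_sub_add_sq_half_add_le hs
  have hu : (fun ω ↦ (P[b | 𝒢]) ω - a ω) =ᵐ[P] fun ω ↦ (-(1 - ρB)) • c ω := by
    filter_upwards [hbias] with ω hω
    rw [neg_smul, ← hω, neg_sub]
  simp_rw [hΔx, hΔv, integral_norm_smul_sq_add_norm_smul_add_smul_sq,
    integral_norm_sq_of_ae_eq_smul hu, neg_sq, ← mul_assoc]
  gcongr

/-- expected squared one-step coupled difference of the VR-HMC update with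
gradient vectors `a` and `E[b | 𝒢]`, under the MSEB bias relation
`a - E[b | 𝒢] = (1 - ρ_B) c` a.s., is bounded by `(δ²/(4L²)) (1-ρ_B)² E‖c‖²`. -/
theorem vrhmc_one_step_bias_bound
    (d : ℕ) (L h : ℝ) (hL : 0 < L) (hh : 0 < h)
    (ρB : ℝ) (hρB : ρB ∈ Set.Ioc (0 : ℝ) 1)
    (δ : ℝ) (hδ : δ = 2 * L * h)
    {Ω : Type*} [inst : MeasurableSpace Ω] (P : Measure Ω) [IsProbabilityMeasure P]
    (𝒢 : MeasurableSpace Ω) (h𝒢 : 𝒢 ≤ inst)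
    (a b c : Ω → EuclideanSpace ℝ (Fin d))
    (ha : Integrable a P) (hb : Integrable b P) (hc : Integrable c P)
    (hc2 : MemLp c 2 P)
    (hbias : ∀ᵐ ω ∂P, a ω - (P[b | 𝒢]) ω = (1 - ρB) • c ω)
    (Δx Δv : Ω → EuclideanSpace ℝ (Fin d))
    (hΔx : ∀ ω, Δx ω =
      (-((1 / 2) * (h - (1 - Real.exp (-δ)) / (2 * L)))) • ((P[b | 𝒢]) ω - a ω))
    (hΔv : ∀ ω, Δv ω =
      (-((1 / (2 * L)) * (1 - Real.exp (-δ)))) • ((P[b | 𝒢]) ω - a ω)) :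
    ∫ ω, (‖Δx ω‖ ^ 2 + ‖Δx ω + Δv ω‖ ^ 2) ∂P ≤
      δ ^ 2 / (4 * L ^ 2) * (1 - ρB) ^ 2 * ∫ ω, ‖c ω‖ ^ 2 ∂P :=
  vrhmc_one_step_bias_bound_general d L h hL hh ρB δ hδ (inst := inst) P 𝒢 a b c hbias Δx Δv hΔx hΔv
end

section
/- Let (𝓜_k)_{k≥0}, (𝓕_k)_{k≥0}, (Q_k)_{k≥0} be sequences of nonnegative real numbers, let M₁, M₂ ≥ 0 and ρ_M, ρ_F ∈ (0, 1], and suppose: 𝓜₀ ≤ M₁Q₀ + 𝓕₀; for every k ≥ 1, 𝓜_k ≤ M₁Q_k + 𝓕_k + (1 - ρ_M)𝓜_{k-1}; for every k ≥ 0, 𝓕_k ≤ M₂·Σ_{l=0}^{k} (1 - ρ_F)^{k-l} Q_l; and Q̄ := sup_k Q_k < ∞. Then sup_k 𝓜_k ≤ (M₁/ρ_M + M₂/(ρ_M ρ_F))·Q̄. -/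
/-! The auxiliary sequence is dominated by a geometrically weighted sum of `Q`, so `𝓕_k ≤ M₂ Q̄ / ρ_F`. The recursion for
`𝓜` then has the form `𝓜_{k+1} ≤ A + (1 - ρ_M) 𝓜_k` with `A = (M₁ + M₂ / ρ_F) Q̄`, whose fixed point
`A / ρ_M` bounds every term by induction. -/

open Finset

theorem sum_range_pow_sub_mul_le_div {r B : ℝ} {Q : ℕ → ℝ} (hr₀ : 0 ≤ r) (hr₁ : r < 1)
    (hB : 0 ≤ B) (hQ : ∀ l, Q l ≤ B) (k : ℕ) :
    ∑ l ∈ range (k + 1), r ^ (k - l) * Q l ≤ B / (1 - r) :=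
  calc ∑ l ∈ range (k + 1), r ^ (k - l) * Q l
      ≤ ∑ l ∈ range (k + 1), r ^ (k - l) * B :=
        sum_le_sum fun l _ => mul_le_mul_of_nonneg_left (hQ l) (pow_nonneg hr₀ _)
    _ = (∑ j ∈ Ico 0 (k + 1), r ^ j) * B := by
        rw [← sum_mul, ← range_eq_Ico, ← sum_range_reflect (r ^ ·) (k + 1)]
        simp
    _ ≤ r ^ 0 / (1 - r) * B := by gcongr; exact geom_sum_Ico_le_of_lt_one hr₀ hr₁
    _ = B / (1 - r) := by ring

theorem le_div_of_le_add_one_sub_mul {u : ℕ → ℝ} {A ρ : ℝ} (hρ : ρ ∈ Set.Ioc (0 : ℝ) 1)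
    (hA : 0 ≤ A) (h0 : u 0 ≤ A) (hrec : ∀ k, u (k + 1) ≤ A + (1 - ρ) * u k) :
    ∀ k, u k ≤ A / ρ := by
  obtain ⟨hρ₀, hρ₁⟩ := hρ
  have hfix : A + (1 - ρ) * (A / ρ) = A / ρ := by field_simp; ring
  intro k
  induction k with
  | zero => exact h0.trans (le_div_self hA hρ₀ hρ₁)
  | succ k ih =>
    calc u (k + 1) ≤ A + (1 - ρ) * u k := hrec k
      _ ≤ A + (1 - ρ) * (A / ρ) := by gcongr
      _ = A / ρ := hfix

theorem mseb_recursion_sup_bound_general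
    (M F Q : ℕ → ℝ)
    (hQnn : ∀ k, 0 ≤ Q k)
    (M₁ M₂ : ℝ) (hM₁ : 0 ≤ M₁) (hM₂ : 0 ≤ M₂)
    (ρM ρF : ℝ) (hρM : ρM ∈ Set.Ioc (0 : ℝ) 1) (hρF : ρF ∈ Set.Ioc (0 : ℝ) 1)
    (h0 : M 0 ≤ M₁ * Q 0 + F 0)
    (hrec : ∀ k, M (k + 1) ≤ M₁ * Q (k + 1) + F (k + 1) + (1 - ρM) * M k)
    (hF : ∀ k, F k ≤ M₂ * ∑ l ∈ Finset.range (k + 1), (1 - ρF) ^ (k - l) * Q l)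
    (hQbdd : BddAbove (Set.range Q)) :
    ∀ k, M k ≤ (M₁ / ρM + M₂ / (ρM * ρF)) * (⨆ l, Q l) := by
  obtain ⟨hρF₀, hρF₁⟩ := hρF
  set Qsup := ⨆ l, Q l
  have hQ_le : ∀ k, Q k ≤ Qsup := le_ciSup hQbdd
  have hQsup : 0 ≤ Qsup := (hQnn 0).trans (hQ_le 0)
  have hF_le : ∀ k, F k ≤ M₂ / ρF * Qsup := fun k => by
    have hgeom := sum_range_pow_sub_mul_le_div (r := 1 - ρF) (by linarith) (by linarith) hQsup hQ_le k
    rw [sub_sub_cancel] at hgeom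
    calc F k ≤ M₂ * (Qsup / ρF) := (hF k).trans (by gcongr)
      _ = M₂ / ρF * Qsup := by ring
  have hterm : ∀ k, M₁ * Q k + F k ≤ (M₁ + M₂ / ρF) * Qsup := fun k => by
    linarith [hF_le k, mul_le_mul_of_nonneg_left (hQ_le k) hM₁]
  have hbound := le_div_of_le_add_one_sub_mul hρM (by positivity) (h0.trans (hterm 0))
    fun k => (hrec k).trans (by linarith [hterm (k + 1)])
  intro k
  convert hbound k using 1
  field_simp

/-- unrolling the MSEB recursion.  If `𝓜₀ ≤ M₁Q₀ + 𝓕₀`,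
`𝓜_k ≤ M₁Q_k + 𝓕_k + (1-ρ_M)𝓜_{k-1}` for `k ≥ 1`,
`𝓕_k ≤ M₂ Σ_{l=0}^k (1-ρ_F)^{k-l} Q_l`, and `Q̄ = sup_k Q_k < ∞`, then
`sup_k 𝓜_k ≤ (M₁/ρ_M + M₂/(ρ_M ρ_F)) Q̄`. -/
theorem mseb_recursion_sup_bound
    (M F Q : ℕ → ℝ)
    (hMnn : ∀ k, 0 ≤ M k) (hFnn : ∀ k, 0 ≤ F k) (hQnn : ∀ k, 0 ≤ Q k)
    (M₁ M₂ : ℝ) (hM₁ : 0 ≤ M₁) (hM₂ : 0 ≤ M₂)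
    (ρM ρF : ℝ) (hρM : ρM ∈ Set.Ioc (0 : ℝ) 1) (hρF : ρF ∈ Set.Ioc (0 : ℝ) 1)
    (h0 : M 0 ≤ M₁ * Q 0 + F 0)
    (hrec : ∀ k, M (k + 1) ≤ M₁ * Q (k + 1) + F (k + 1) + (1 - ρM) * M k)
    (hF : ∀ k, F k ≤ M₂ * ∑ l ∈ Finset.range (k + 1), (1 - ρF) ^ (k - l) * Q l)
    (hQbdd : BddAbove (Set.range Q)) :
    ∀ k, M k ≤ (M₁ / ρM + M₂ / (ρM * ρF)) * (⨆ l, Q l) :=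
  mseb_recursion_sup_bound_general M F Q hQnn M₁ M₂ hM₁ hM₂ ρM ρF hρM hρF h0 hrec hF hQbdd
end

section
/- Let (x_k)_{k≥0} be a sequence of nonnegative real numbers, α ∈ (0, 1], and A, B ≥ 0. Suppose that for every k ≥ 0, x_{k+1}² ≤ ((1 - α)x_k + B)² + A. Then for every k ≥ 0, x_k ≤ (1 - α)^k x₀ + B/α + A/(B + √(α(2 - α)A)), and consequently x_k ≤ (1 - α)^k x₀ + B/α + √(A/α). -/
/-!
Write `s = √(α(2-α)A)` and `D = A/(B + s)`. Since `s² - B² ≤ s² = α(2-α)D(B + s)`, we get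
`s - B ≤ α(2-α)D`, hence `A = D(B + s) ≤ 2BD + α(2-α)D²`. This quadratic inequality is exactly
what makes `T_k = (1-α)^k x₀ + B/α + D` an upper barrier: from `x_k ≤ T_k` one gets
`(1-α)x_k + B ≤ T_{k+1} - αD` and `(T_{k+1} - αD)² + A ≤ T_{k+1}²`, so `x_{k+1} ≤ T_{k+1}`.
Finally `D ≤ A/s = √(A/(α(2-α))) ≤ √(A/α)`.
-/

open Real Set

section Offset

variable {q A B : ℝ}

theorem le_two_mul_mul_div_add_sqrt_add_mul_sq (hq : 0 < q) (hA : 0 ≤ A) (hB : 0 ≤ B) :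
    A ≤ 2 * B * (A / (B + √(q * A))) + q * (A / (B + √(q * A))) ^ 2 := by
  set s := √(q * A)
  set D := A / (B + s)
  have hs : s ^ 2 = q * A := sq_sqrt (mul_nonneg hq.le hA)
  rcases (add_nonneg hB (sqrt_nonneg (q * A))).eq_or_lt with hBs | hBs
  · have hs0 : s = 0 := by linarith [sqrt_nonneg (q * A)]
    have hA0 : A = 0 := by
      simpa [hs0, hq.ne'] using hs.symm
    simp only [hA0]
    positivity
  have hDA : D * (B + s) = A := div_mul_cancel₀ A hBs.ne'
  have hsB : s - B ≤ q * D :=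
    le_of_mul_le_mul_right (by nlinarith) hBs
  have hD : 0 ≤ D := div_nonneg hA hBs.le
  calc A = D * B + D * s := by rw [← hDA]; ring
    _ ≤ D * B + D * (B + q * D) := by gcongr; linarith
    _ = 2 * B * D + q * D ^ 2 := by ring

theorem div_add_sqrt_le_sqrt_div (hq : 0 < q) (hA : 0 ≤ A) (hB : 0 ≤ B) :
    A / (B + √(q * A)) ≤ √(A / q) := by
  rcases hA.eq_or_lt with rfl | hA
  · simp
  have hs : 0 < √(q * A) := sqrt_pos.mpr (mul_pos hq hA)
  rw [le_sqrt (by positivity) (by positivity), div_pow, div_le_div_iff₀ (by positivity) hq]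
  have : q * A ≤ (B + √(q * A)) ^ 2 := by
    nlinarith [sq_sqrt (mul_nonneg hq.le hA.le)]
  nlinarith

end Offset

section Recursion

variable {α A B D : ℝ}

theorem le_mul_add_of_sq_le_of_le (hα : α ∈ Ioc 0 1) (hB : 0 ≤ B) (hD : 0 ≤ D)
    (hAD : A ≤ 2 * B * D + α * (2 - α) * D ^ 2) {p y z : ℝ} (hp : 0 ≤ p) (hy₀ : 0 ≤ y)
    (hy : y ≤ p + B / α + D) (hz : z ^ 2 ≤ ((1 - α) * y + B) ^ 2 + A) :
    z ≤ (1 - α) * p + B / α + D := by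
  obtain ⟨hα₀, hα₁⟩ := hα
  set T := (1 - α) * p + B / α + D
  have hBα : α * (B / α) = B := mul_div_cancel₀ B hα₀.ne'
  have hc : 0 ≤ B / α := div_nonneg hB hα₀.le
  have hTc : B / α + D ≤ T := by
    have : 0 ≤ (1 - α) * p := mul_nonneg (by linarith) hp
    linarith
  have hlin : (1 - α) * y + B ≤ T - α * D := by
    nlinarith [mul_le_mul_of_nonneg_left hy (by linarith : (0 : ℝ) ≤ 1 - α)]
  have hsq : ((1 - α) * y + B) ^ 2 ≤ (T - α * D) ^ 2 :=
    pow_le_pow_left₀ (by positivity) hlin 2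
  have hbarrier : (T - α * D) ^ 2 + A ≤ T ^ 2 := by
    nlinarith [mul_le_mul_of_nonneg_left hTc (mul_nonneg hα₀.le hD)]
  have hT : 0 ≤ T := hc.trans (le_add_of_nonneg_right hD |>.trans hTc)
  exact le_of_abs_le (abs_le_of_sq_le_sq (by linarith) hT)

theorem le_pow_mul_add_of_sq_le (hα : α ∈ Ioc 0 1) (hB : 0 ≤ B) (hD : 0 ≤ D)
    (hAD : A ≤ 2 * B * D + α * (2 - α) * D ^ 2) {x : ℕ → ℝ} (hx : ∀ k, 0 ≤ x k)
    (hrec : ∀ k, x (k + 1) ^ 2 ≤ ((1 - α) * x k + B) ^ 2 + A) (k : ℕ) :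
    x k ≤ (1 - α) ^ k * x 0 + B / α + D := by
  induction k with
  | zero => simp only [pow_zero, one_mul]; linarith [div_nonneg hB hα.1.le]
  | succ k ih =>
    rw [pow_succ, mul_comm _ (1 - α), mul_assoc]
    exact le_mul_add_of_sq_le_of_le hα hB hD hAD
      (mul_nonneg (pow_nonneg (sub_nonneg.mpr hα.2) k) (hx 0)) (hx k) ih (hrec k)

end Recursion

/-- the recursion lemma (Lemma 7 of Dalalyan–Karagulyan 2019):
if `x_{k+1}² ≤ ((1-α)x_k + B)² + A` for all `k`, then
`x_k ≤ (1-α)^k x₀ + B/α + A/(B + √(α(2-α)A))` and consequently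
`x_k ≤ (1-α)^k x₀ + B/α + √(A/α)`. -/
theorem dalalyan_recursion_lemma
    (x : ℕ → ℝ) (hx : ∀ k, 0 ≤ x k)
    (α : ℝ) (hα : α ∈ Set.Ioc (0 : ℝ) 1)
    (A B : ℝ) (hA : 0 ≤ A) (hB : 0 ≤ B)
    (hrec : ∀ k, (x (k + 1)) ^ 2 ≤ ((1 - α) * x k + B) ^ 2 + A) :
    ∀ k,
      x k ≤ (1 - α) ^ k * x 0 + B / α + A / (B + Real.sqrt (α * (2 - α) * A)) ∧
      x k ≤ (1 - α) ^ k * x 0 + B / α + Real.sqrt (A / α) := by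
  have hq : 0 < α * (2 - α) := mul_pos hα.1 (by linarith [hα.2])
  have hD : 0 ≤ A / (B + √(α * (2 - α) * A)) := by positivity
  have hDα : A / (B + √(α * (2 - α) * A)) ≤ √(A / α) :=
    calc _ ≤ √(A / (α * (2 - α))) := div_add_sqrt_le_sqrt_div hq hA hB
      _ ≤ √(A / α) := sqrt_le_sqrt (div_le_div_of_nonneg_left hA hα.1 (by nlinarith [hα.1, hα.2]))
  intro k
  have hk := le_pow_mul_add_of_sq_le hα hB hD
    (le_two_mul_mul_div_add_sqrt_add_mul_sq hq hA hB) hx hrec k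
  exact ⟨hk, hk.trans (by gcongr)⟩
end

section
/- Let L ≥ m > 0 with condition number κ := L/m, let Θ ≥ 0, ρ_B ∈ (0, 1], F₁ ≥ 0, F₂ ≥ 0, and let the step size h > 0 satisfy Lh ≤ 1/(10κ) and Lh·√Θ ≤ 1/(10κ). Set δ := 2Lh, A := Θ·F₁·δ⁴/(4L), and B := (1 - ρ_B)·√A + δ²·(√(15δ) + 5√3)·√F₂/(60√L). Suppose (w_k)_{k≥0} is a sequence of nonnegative reals satisfying w_{k+1}² ≤ A + (e^{-δ/(4κ)}·w_k + B)² for every k ≥ 0. Then for every k ≥ 0, w_k ≤ e^{-k·h·m/2}·w₀ + 8·√(L·F₂)·κ·h + 4·√(Θ·F₁)·(2(1 - ρ_B)·√L·κ·h + L·√κ·h^{3/2}). -/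
set_option maxHeartbeats 2000000 in
/-- the quantitative arithmetic core of the main VR-HMC theorem (Theorem 1):
from the one-step recursion `w_{k+1}² ≤ A + (e^{-δ/(4κ)} w_k + B)²` with
`A = ΘF₁δ⁴/(4L)` and `B = (1-ρ_B)√A + δ²(√(15δ)+5√3)√F₂/(60√L)`, deduce
`w_k ≤ e^{-khm/2} w₀ + 8√(LF₂)κh + 4√(ΘF₁)(2(1-ρ_B)√L κh + L√κ h^{3/2})`. -/
theorem vrhmc_main_theorem_recursion
    (L m : ℝ) (hm : 0 < m) (hLm : m ≤ L)
    (κ : ℝ) (hκ : κ = L / m)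
    (Θ : ℝ) (hΘ : 0 ≤ Θ)
    (ρB : ℝ) (hρB : ρB ∈ Set.Ioc (0 : ℝ) 1)
    (F₁ F₂ : ℝ) (hF₁ : 0 ≤ F₁) (hF₂ : 0 ≤ F₂)
    (h : ℝ) (hh : 0 < h)
    (hstep1 : L * h ≤ 1 / (10 * κ))
    (hstep2 : L * h * Real.sqrt Θ ≤ 1 / (10 * κ))
    (δ : ℝ) (hδ : δ = 2 * L * h)
    (A B : ℝ)
    (hA : A = Θ * F₁ * δ ^ 4 / (4 * L))
    (hB : B = (1 - ρB) * Real.sqrt A +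
      δ ^ 2 * (Real.sqrt (15 * δ) + 5 * Real.sqrt 3) * Real.sqrt F₂ / (60 * Real.sqrt L))
    (w : ℕ → ℝ) (hw : ∀ k, 0 ≤ w k)
    (hrec : ∀ k, (w (k + 1)) ^ 2 ≤ A + (Real.exp (-(δ / (4 * κ))) * w k + B) ^ 2) :
    ∀ k : ℕ, w k ≤ Real.exp (-(k * h * m / 2)) * w 0 +
      8 * Real.sqrt (L * F₂) * κ * h +
      4 * Real.sqrt (Θ * F₁) *
        (2 * (1 - ρB) * Real.sqrt L * κ * h + L * Real.sqrt κ * h ^ ((3 : ℝ) / 2)) := by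
  have hL : 0 < L := lt_of_lt_of_le hm hLm
  have hκpos : 0 < κ := by rw [hκ]; positivity
  have hκ1 : 1 ≤ κ := by rw [hκ]; exact (one_le_div hm).2 hLm
  have hLh : L * h ≤ 1 / 10 := by
    refine hstep1.trans ?_
    rw [div_le_div_iff₀ (by positivity) (by norm_num)]
    linarith
  have hmh : m * h ≤ 1 / 10 := le_trans (mul_le_mul_of_nonneg_right hLm hh.le) hLh
  have hmh0 : 0 < h * m := by positivity
  have hρ1 : ρB ≤ 1 := hρB.2
  have hA0 : 0 ≤ A := by rw [hA]; positivity
  have hAval : A = 4 * (Θ * F₁) * L ^ 3 * h ^ 4 := by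
    rw [hA, hδ]; field_simp; ring
  have hB0 : 0 ≤ B := by
    rw [hB]
    have h1 : 0 ≤ (1 - ρB) * Real.sqrt A :=
      mul_nonneg (by linarith) (Real.sqrt_nonneg _)
    have h2 : 0 ≤ δ ^ 2 * (Real.sqrt (15 * δ) + 5 * Real.sqrt 3) * Real.sqrt F₂ /
        (60 * Real.sqrt L) := by positivity
    linarith
  have hx : δ / (4 * κ) = h * m / 2 := by
    rw [hδ, hκ]; field_simp; ring
  set c := Real.exp (-(h * m / 2)) with hcdef
  have hc0 : 0 < c := Real.exp_pos _
  have hc1 : c < 1 := Real.exp_lt_one_iff.2 (neg_lt_zero.2 (by positivity))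
  have hc2 : c ^ 2 = Real.exp (-(h * m)) := by
    rw [sq, ← Real.exp_add]; congr 1; ring
  have hd : h * m / 2 ≤ 1 - c ^ 2 := by
    rw [hc2]
    have hy1 : h * m ≤ 1 := by linarith [hmh, (mul_comm h m : h * m = m * h)]
    have h1 : 1 + h * m ≤ Real.exp (h * m) := by
      have := Real.add_one_le_exp (h * m); linarith
    have h3 : Real.exp (-(h * m)) * Real.exp (h * m) = 1 := by
      rw [← Real.exp_add]; simp
    have hu0 : 0 < Real.exp (-(h * m)) := Real.exp_pos _
    have h4 : Real.exp (-(h * m)) * (1 + h * m) ≤ 1 := by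
      calc Real.exp (-(h * m)) * (1 + h * m) ≤ Real.exp (-(h * m)) * Real.exp (h * m) :=
            mul_le_mul_of_nonneg_left h1 hu0.le
        _ = 1 := h3
    have hu1 : Real.exp (-(h * m)) ≤ 1 := Real.exp_le_one_iff.2 (by linarith [hmh0])
    linarith [h4, mul_nonneg (sub_nonneg.2 hu1) (sub_nonneg.2 hy1)]
  have hd0 : 0 < 1 - c ^ 2 := lt_of_lt_of_le (by positivity) hd
  set q := Real.sqrt (A / (1 - c ^ 2)) with hqdef
  have hq0 : 0 ≤ q := Real.sqrt_nonneg _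
  have hq2 : q ^ 2 * (1 - c ^ 2) = A := by
    rw [hqdef, Real.sq_sqrt (div_nonneg hA0 hd0.le)]
    field_simp
  set P := 2 * B / (1 - c ^ 2) with hPdef
  set S := P + q with hSdef
  have hp0 : 0 ≤ P := div_nonneg (by linarith) hd0.le
  have hS0 : 0 ≤ S := add_nonneg hp0 hq0
  have hp : P * (1 - c ^ 2) = 2 * B := div_mul_cancel₀ _ hd0.ne'
  have key : A + (c * S + B) ^ 2 ≤ S ^ 2 := by
    have hint1 : P * (P * (1 - c ^ 2)) = P * (2 * B) := by rw [hp]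
    have hint2 : q * (P * (1 - c ^ 2)) = q * (2 * B) := by rw [hp]
    have hint3 : B * (P * (1 - c ^ 2)) = B * (2 * B) := by rw [hp]
    have u1 : 0 ≤ B * P * ((1 - c) * (3 - c)) :=
      mul_nonneg (mul_nonneg hB0 hp0) (mul_nonneg (by linarith) (by linarith))
    have u2 : 0 ≤ B * q * (2 - c) :=
      mul_nonneg (mul_nonneg hB0 hq0) (by linarith)
    rw [hSdef]
    linarith [hint1, hint2, hint3, hq2, u1, u2]
  have hcSB : c * S + B ≤ S := by
    have h1 : (c * S + B) ^ 2 ≤ S ^ 2 := by linarith [key, hA0]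
    have h2 : 0 ≤ c * S + B := add_nonneg (mul_nonneg hc0.le hS0) hB0
    calc c * S + B = Real.sqrt ((c * S + B) ^ 2) := (Real.sqrt_sq h2).symm
      _ ≤ Real.sqrt (S ^ 2) := Real.sqrt_le_sqrt h1
      _ = S := Real.sqrt_sq hS0
  have hmain : ∀ k, w k ≤ c ^ k * w 0 + S := by
    intro k
    induction k with
    | zero => simp only [pow_zero, one_mul]; linarith
    | succ k ih =>
      have h1 : (w (k + 1)) ^ 2 ≤ A + (c * w k + B) ^ 2 := by
        have := hrec k; rwa [hx] at this
      have hnn : 0 ≤ c * w k + B := add_nonneg (mul_nonneg hc0.le (hw k)) hB0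
      have h2 : c * w k + B ≤ c * (c ^ k * w 0 + S) + B := by
        have := mul_le_mul_of_nonneg_left ih hc0.le; linarith
      have h3 : (w (k + 1)) ^ 2 ≤ A + (c * (c ^ k * w 0 + S) + B) ^ 2 := by
        have := mul_self_le_mul_self hnn h2
        linarith [h1, this]
      have ht0 : 0 ≤ c ^ k * w 0 := mul_nonneg (pow_nonneg hc0.le _) (hw 0)
      have h4 : A + (c * (c ^ k * w 0 + S) + B) ^ 2 ≤ (c ^ (k + 1) * w 0 + S) ^ 2 := by
        have hexp : c ^ (k + 1) = c * c ^ k := by ring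
        rw [hexp]
        have v : 0 ≤ c * (c ^ k * w 0) * (S - (c * S + B)) :=
          mul_nonneg (mul_nonneg hc0.le ht0) (sub_nonneg.2 hcSB)
        linarith [key, v]
      have h6 : 0 ≤ c ^ (k + 1) * w 0 + S :=
        add_nonneg (mul_nonneg (pow_nonneg hc0.le _) (hw 0)) hS0
      calc w (k + 1) = Real.sqrt ((w (k + 1)) ^ 2) := (Real.sqrt_sq (hw _)).symm
        _ ≤ Real.sqrt ((c ^ (k + 1) * w 0 + S) ^ 2) := Real.sqrt_le_sqrt (h3.trans h4)
        _ = c ^ (k + 1) * w 0 + S := Real.sqrt_sq h6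
  -- square-root identities
  have hsL2 : Real.sqrt L * Real.sqrt L = L := Real.mul_self_sqrt hL.le
  have hsκ2 : Real.sqrt κ * Real.sqrt κ = κ := Real.mul_self_sqrt hκpos.le
  have hsΘF : Real.sqrt (Θ * F₁) * Real.sqrt (Θ * F₁) = Θ * F₁ :=
    Real.mul_self_sqrt (mul_nonneg hΘ hF₁)
  have hsh2 : Real.sqrt h * Real.sqrt h = h := Real.mul_self_sqrt hh.le
  have hsF2 : Real.sqrt F₂ * Real.sqrt F₂ = F₂ := Real.mul_self_sqrt hF₂
  have hsLF : Real.sqrt (L * F₂) = Real.sqrt L * Real.sqrt F₂ := Real.sqrt_mul hL.le _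
  have hκm : κ * m = L := by rw [hκ]; field_simp
  have hh32 : h ^ ((3 : ℝ) / 2) = h * Real.sqrt h := by
    rw [show (3 : ℝ) / 2 = 1 + 1 / 2 by norm_num, Real.rpow_add hh, Real.rpow_one,
      Real.sqrt_eq_rpow]
  -- bound q
  have hpart1 : q ≤ 4 * Real.sqrt (Θ * F₁) * L * Real.sqrt κ * (h * Real.sqrt h) := by
    have hR0 : 0 ≤ 4 * Real.sqrt (Θ * F₁) * L * Real.sqrt κ * (h * Real.sqrt h) := by
      positivity
    have hsq : (4 * Real.sqrt (Θ * F₁) * L * Real.sqrt κ * (h * Real.sqrt h)) ^ 2 =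
        16 * (Θ * F₁) * L ^ 2 * κ * (h ^ 2 * h) := by
      rw [show (4 * Real.sqrt (Θ * F₁) * L * Real.sqrt κ * (h * Real.sqrt h)) ^ 2 =
        16 * (Real.sqrt (Θ * F₁) * Real.sqrt (Θ * F₁)) * L ^ 2 *
          (Real.sqrt κ * Real.sqrt κ) * (h ^ 2 * (Real.sqrt h * Real.sqrt h)) from by ring,
        hsΘF, hsκ2, hsh2]
    have h1 : A / (1 - c ^ 2) ≤ A / (h * m / 2) :=
      div_le_div_of_nonneg_left hA0 (by positivity) hd
    have h2 : A / (h * m / 2) ≤ 16 * (Θ * F₁) * L ^ 2 * κ * (h ^ 2 * h) := by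
      rw [div_le_iff₀ (by positivity), hAval]
      have e1 : 16 * (Θ * F₁) * L ^ 2 * κ * (h ^ 2 * h) * (h * m / 2) =
          8 * (Θ * F₁) * L ^ 2 * (κ * m) * h ^ 4 := by ring
      rw [e1, hκm]
      have hX : 0 ≤ Θ * F₁ * L ^ 3 * h ^ 4 := by positivity
      linarith [hX]
    calc q ≤ Real.sqrt ((4 * Real.sqrt (Θ * F₁) * L * Real.sqrt κ * (h * Real.sqrt h)) ^ 2) := by
          rw [hqdef]; exact Real.sqrt_le_sqrt (by rw [hsq]; exact h1.trans h2)
      _ = _ := Real.sqrt_sq hR0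
  -- bound B from above
  have hsA : Real.sqrt A ≤ 2 * Real.sqrt (Θ * F₁) * (L * Real.sqrt L) * h ^ 2 := by
    have hR0 : 0 ≤ 2 * Real.sqrt (Θ * F₁) * (L * Real.sqrt L) * h ^ 2 := by positivity
    have hsq : (2 * Real.sqrt (Θ * F₁) * (L * Real.sqrt L) * h ^ 2) ^ 2 =
        4 * (Θ * F₁) * (L ^ 2 * L) * h ^ 4 := by
      rw [show (2 * Real.sqrt (Θ * F₁) * (L * Real.sqrt L) * h ^ 2) ^ 2 =
        4 * (Real.sqrt (Θ * F₁) * Real.sqrt (Θ * F₁)) *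
          (L ^ 2 * (Real.sqrt L * Real.sqrt L)) * h ^ 4 from by ring, hsΘF, hsL2]
    calc Real.sqrt A ≤ Real.sqrt ((2 * Real.sqrt (Θ * F₁) * (L * Real.sqrt L) * h ^ 2) ^ 2) := by
          refine Real.sqrt_le_sqrt (le_of_eq ?_)
          rw [hsq, hAval]; ring
      _ = _ := Real.sqrt_sq hR0
  have hs15 : Real.sqrt (15 * δ) ≤ 2 := by
    rw [hδ]
    calc Real.sqrt (15 * (2 * L * h)) ≤ Real.sqrt 4 :=
          Real.sqrt_le_sqrt (by linarith [hLh])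
      _ = 2 := by
          rw [show (4:ℝ) = 2 ^ 2 by norm_num, Real.sqrt_sq (by norm_num)]
  have hs3 : Real.sqrt 3 ≤ 2 := by
    calc Real.sqrt 3 ≤ Real.sqrt 4 := Real.sqrt_le_sqrt (by norm_num)
      _ = 2 := by rw [show (4:ℝ) = 2 ^ 2 by norm_num, Real.sqrt_sq (by norm_num)]
  have hsL0 : 0 < Real.sqrt L := Real.sqrt_pos.2 hL
  have hterm2 : δ ^ 2 * (Real.sqrt (15 * δ) + 5 * Real.sqrt 3) * Real.sqrt F₂ /
      (60 * Real.sqrt L) ≤ (4 / 5) * (L * Real.sqrt L) * h ^ 2 * Real.sqrt F₂ := by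
    rw [div_le_iff₀ (by positivity : (0:ℝ) < 60 * Real.sqrt L)]
    have hX : Real.sqrt (15 * δ) + 5 * Real.sqrt 3 ≤ 12 := by linarith
    have hX0 : 0 ≤ Real.sqrt (15 * δ) + 5 * Real.sqrt 3 := by positivity
    have hgoal : (4 / 5) * (L * Real.sqrt L) * h ^ 2 * Real.sqrt F₂ * (60 * Real.sqrt L) =
        48 * L ^ 2 * h ^ 2 * Real.sqrt F₂ := by
      rw [show (4 / 5 : ℝ) * (L * Real.sqrt L) * h ^ 2 * Real.sqrt F₂ * (60 * Real.sqrt L) =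
        48 * (L * (Real.sqrt L * Real.sqrt L)) * h ^ 2 * Real.sqrt F₂ from by ring, hsL2]
      ring
    rw [hgoal]
    have e2 : δ ^ 2 * (Real.sqrt (15 * δ) + 5 * Real.sqrt 3) ≤ δ ^ 2 * 12 :=
      mul_le_mul_of_nonneg_left hX (sq_nonneg δ)
    have e3 : δ ^ 2 * (Real.sqrt (15 * δ) + 5 * Real.sqrt 3) * Real.sqrt F₂ ≤
        δ ^ 2 * 12 * Real.sqrt F₂ :=
      mul_le_mul_of_nonneg_right e2 (Real.sqrt_nonneg _)
    have e4 : δ ^ 2 * 12 * Real.sqrt F₂ ≤ 48 * L ^ 2 * h ^ 2 * Real.sqrt F₂ := by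
      rw [hδ]
      exact le_of_eq (by ring)
    linarith
  have hBup : B ≤ (1 - ρB) * (2 * Real.sqrt (Θ * F₁) * (L * Real.sqrt L) * h ^ 2) +
      (4 / 5) * (L * Real.sqrt L) * h ^ 2 * Real.sqrt F₂ := by
    rw [hB]
    have := mul_le_mul_of_nonneg_left hsA (by linarith : (0:ℝ) ≤ 1 - ρB)
    linarith [hterm2]
  have hpart2 : 2 * B / (1 - c ^ 2) ≤
      8 * Real.sqrt (L * F₂) * κ * h +
      8 * (1 - ρB) * Real.sqrt (Θ * F₁) * Real.sqrt L * κ * h := by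
    have h1 : 2 * B / (1 - c ^ 2) ≤ 2 * B / (h * m / 2) :=
      div_le_div_of_nonneg_left (by linarith) (by positivity) hd
    have h2 : 2 * B / (h * m / 2) = 4 * B / (h * m) := by
      field_simp; ring
    have h3 : 4 * B / (h * m) ≤
        8 * Real.sqrt (L * F₂) * κ * h +
        8 * (1 - ρB) * Real.sqrt (Θ * F₁) * Real.sqrt L * κ * h := by
      rw [div_le_iff₀ hmh0, hsLF]
      have hB4 := mul_le_mul_of_nonneg_left hBup (by norm_num : (0:ℝ) ≤ 4)
      have hexp : (8 * (Real.sqrt L * Real.sqrt F₂) * κ * h +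
          8 * (1 - ρB) * Real.sqrt (Θ * F₁) * Real.sqrt L * κ * h) * (h * m) =
          8 * Real.sqrt L * Real.sqrt F₂ * L * h ^ 2 +
          8 * (1 - ρB) * Real.sqrt (Θ * F₁) * Real.sqrt L * L * h ^ 2 := by
        rw [show (8 * (Real.sqrt L * Real.sqrt F₂) * κ * h +
          8 * (1 - ρB) * Real.sqrt (Θ * F₁) * Real.sqrt L * κ * h) * (h * m) =
          8 * Real.sqrt L * Real.sqrt F₂ * (κ * m) * h ^ 2 +
          8 * (1 - ρB) * Real.sqrt (Θ * F₁) * Real.sqrt L * (κ * m) * h ^ 2 from by ring, hκm]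
      rw [hexp]
      have hY : 0 ≤ Real.sqrt L * Real.sqrt F₂ * L * h ^ 2 := by positivity
      linarith [hB4, hY]
    calc 2 * B / (1 - c ^ 2) ≤ 2 * B / (h * m / 2) := h1
      _ = 4 * B / (h * m) := h2
      _ ≤ _ := h3
  intro k
  have hck : c ^ k = Real.exp (-(k * h * m / 2)) := by
    rw [hcdef, ← Real.exp_nat_mul]
    congr 1; ring
  refine (hmain k).trans ?_
  rw [← hck]
  have hfin : S ≤ 8 * Real.sqrt (L * F₂) * κ * h +
      4 * Real.sqrt (Θ * F₁) *
        (2 * (1 - ρB) * Real.sqrt L * κ * h + L * Real.sqrt κ * h ^ ((3 : ℝ) / 2)) := by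
    rw [hh32, hSdef]
    linarith [hpart1, hpart2]
  linarith
end
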